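/- arXiv:2111.04211 — 4 statements merged into one kernel-verified Lean document; each statement's English description precedes it below -/
import Mathlib

section
/- Let λ be a circular permutation of [n] (n ≥ 2). Form the linear permutation λ' of length n−1 by reading the entries of λ clockwise starting from the entry immediately after 1 and deleting the entry 1. Then λ avoids the vincular circular pattern 2̄3̄41 if and only if λ' (as a linear word on {2,…,n}) avoids both the vincular pattern 1̄2̄3 and the vincular pattern 41‾2‾3 (i.e., 41\overline{23}). -/
open List

/-- `w` is a linear permutation of `[n] = {1,…,n}` written in one-line notation. -/
def IsPermOf (n : ℕ) (w : List ℕ) : Prop :=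
  w.Perm ((List.range n).map (· + 1))

/-- occurrence of the vincular pattern 1̄2̄3 : positions a, a+1, c with c > a+1
forming an increasing triple. -/
def Occ123 (w : List ℕ) : Prop :=
  ∃ a c, a + 1 < c ∧ c < w.length ∧
    w.getD a 0 < w.getD (a + 1) 0 ∧ w.getD (a + 1) 0 < w.getD c 0

/-- occurrence of the vincular pattern 41\overline{23} : positions a < b < c (and c+1)
with w_b < w_c < w_{c+1} < w_a. -/
def Occ4123 (w : List ℕ) : Prop :=
  ∃ a b c, a < b ∧ b < c ∧ c + 1 < w.length ∧
    w.getD b 0 < w.getD c 0 ∧ w.getD c 0 < w.getD (c + 1) 0 ∧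
    w.getD (c + 1) 0 < w.getD a 0

/-- occurrence of the vincular pattern 1\overline{23} : positions a < b (and b+1)
forming an increasing triple. -/
def Occ1_23 (w : List ℕ) : Prop :=
  ∃ a b, a < b ∧ b + 1 < w.length ∧
    w.getD a 0 < w.getD b 0 ∧ w.getD b 0 < w.getD (b + 1) 0

/-- occurrence of the vincular pattern \overline{23}41 : positions a, a+1, c, d with
a+1 < c < d and w_d < w_a < w_{a+1} < w_c. -/
def Occ2341 (w : List ℕ) : Prop :=
  ∃ a c d, a + 1 < c ∧ c < d ∧ d < w.length ∧
    w.getD d 0 < w.getD a 0 ∧ w.getD a 0 < w.getD (a + 1) 0 ∧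
    w.getD (a + 1) 0 < w.getD c 0

/-- a circular permutation (represented by any linear reading `w`) avoids
\overline{23}41 iff no cyclic rotation of `w` contains it. -/
def CircAvoids2341 (w : List ℕ) : Prop := ∀ k, ¬ Occ2341 (w.rotate k)

/-- the set `L_n` of linear permutations of `[n]` avoiding both 1̄2̄3 and 41\overline{23}. -/
def Lset (n : ℕ) : Set (List ℕ) :=
  {w | IsPermOf n w ∧ ¬ Occ123 w ∧ ¬ Occ4123 w}

/-- the permutation (n−1)(n−2)⋯1 n. -/
def excludedPerm (n : ℕ) : List ℕ :=
  ((List.range (n - 1)).map (· + 1)).reverse ++ [n]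

/-- `L_n^* = L_n \ {(n−1)(n−2)⋯1n}`. -/
def Lstar (n : ℕ) : Set (List ℕ) := Lset n \ {excludedPerm n}

/-- `B_n`: members of `L_n^*` in which 1 occurs to the right of n. -/
def Bset (n : ℕ) : Set (List ℕ) :=
  {w ∈ Lstar n | w.idxOf n < w.idxOf 1}

/-- `C_n`: members of `L_n^*` in which 1 occurs to the left of n and 2 to its right. -/
def Cset (n : ℕ) : Set (List ℕ) :=
  {w ∈ Lstar n | w.idxOf 1 < w.idxOf n ∧ w.idxOf n < w.idxOf 2}

/-- members of `B_n` ending in the two letters i, j. -/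
def Bnij (n i j : ℕ) : Set (List ℕ) :=
  {w ∈ Bset n | ∃ u, w = u ++ [i, j]}

/-- members of `C_n` ending in the two letters i, j. -/
def Cnij (n i j : ℕ) : Set (List ℕ) :=
  {w ∈ Cset n | ∃ u, w = u ++ [i, j]}

noncomputable def bcount (n i j : ℕ) : ℕ := (Bnij n i j).ncard
noncomputable def ccount (n i j : ℕ) : ℕ := (Cnij n i j).ncard

/-- `b(n,j)`: the number of members of `B_n` ending in the letter j. -/
noncomputable def bLast (n j : ℕ) : ℕ := Set.ncard {w ∈ Bset n | ∃ u, w = u ++ [j]}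

/-- `c(n,j)`: the number of members of `C_n` ending in the letter j. -/
noncomputable def cLast (n j : ℕ) : ℕ := Set.ncard {w ∈ Cset n | ∃ u, w = u ++ [j]}

/-- `V_n`: linear permutations of `[n]` avoiding both 1̄2̄3 and 1\overline{23}. -/
def Vset (n : ℕ) : Set (List ℕ) :=
  {w | IsPermOf n w ∧ ¬ Occ123 w ∧ ¬ Occ1_23 w}

/-- `v(n,j)`: the number of members of `V_n` ending in the letter j. -/
noncomputable def vcount (n j : ℕ) : ℕ := Set.ncard {w ∈ Vset n | ∃ u, w = u ++ [j]}

/-!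
Cutting the circle just before the letter 1 identifies the rotations of `1 :: t` with the words
`u ++ 1 :: v` where `t = v ++ u`. Since 1 is the smallest letter, in an occurrence `x y … z … w`
of 2̄3̄41 it can only sit on the arc from `z` round to `x` (then `x y … z` is an occurrence of
1̄2̄3 in `t`) or strictly between `y` and `z` (then `t` reads `z … w … x y`, an occurrence of
41\overline{23}). Conversely, each of these occurrences in `t` is closed up by the letter 1 into
an occurrence of 2̄3̄41 on the circle.
-/

namespace List

variable {α : Type*}

theorem isRotated_cons_iff {x : α} {t r : List α} :
    (x :: t) ~r r ↔ ∃ u v, v ++ u = t ∧ r = u ++ x :: v := by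
  constructor
  · intro h
    obtain ⟨n, hn, rfl⟩ := isRotated_iff_mod.1 h
    rcases n with _ | i
    · exact ⟨[], t, by simp, by simp⟩
    · refine ⟨t.drop i, t.take i, take_append_drop i t, ?_⟩
      rw [rotate_eq_drop_append_take hn]
      simp
  · rintro ⟨u, v, rfl, rfl⟩
    exact isRotated_append (l := x :: v) (l' := u)

theorem getD_of_forall_mem {p : α → Prop} {l : List α} (h : ∀ x ∈ l, p x) {i : ℕ}
    (hi : i < l.length) (d : α) : p (l.getD i d) := by
  rw [getD_eq_getElem _ _ hi]
  exact h _ (getElem_mem hi)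

variable {u v : List α} {x d : α} {i : ℕ}

theorem getD_append_cons_of_lt_length (h : i < u.length) :
    (u ++ x :: v).getD i d = (v ++ u).getD (v.length + i) d := by
  rw [getD_append u _ _ _ h, getD_append_right v u _ _ (by omega), Nat.add_sub_cancel_left]

theorem getD_append_cons_length_add_one_add (h : i < v.length) :
    (u ++ x :: v).getD (u.length + 1 + i) d = (v ++ u).getD i d := by
  rw [getD_append_right u _ _ _ (by omega), getD_append v u _ _ h]
  simp [Nat.add_assoc, Nat.add_comm 1]

end List

open List

section Occurrences

variable {m : ℕ} {t : List ℕ}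

theorem Occ123.occ2341_append_singleton (h : Occ123 t) (ht : ∀ x ∈ t, m < x) :
    Occ2341 (t ++ [m]) := by
  obtain ⟨a, c, hac, hc, h₁, h₂⟩ := h
  refine ⟨a, c, t.length, hac, hc, by simp, ?_, ?_, ?_⟩ <;>
    simp only [getD_append _ _ _ _ hc, getD_append _ _ _ _ (hac.trans hc),
      getD_append _ _ _ _ ((Nat.lt_succ_self a).trans (hac.trans hc))]
  · simpa using getD_of_forall_mem ht (by omega) 0
  · exact h₁
  · exact h₂

theorem Occ4123.exists_occ2341 (h : Occ4123 t) (m : ℕ) :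
    ∃ u v, v ++ u = t ∧ Occ2341 (u ++ m :: v) := by
  obtain ⟨a, b, c, hab, hbc, hc, h₁, h₂, h₃⟩ := h
  obtain ⟨v, u, rfl, rfl⟩ : ∃ v u, c = v.length ∧ t = v ++ u :=
    ⟨t.take c, t.drop c, by simp; omega, (take_append_drop c t).symm⟩
  simp only [length_append] at hc
  refine ⟨u, v, rfl, 0, u.length + 1 + a, u.length + 1 + b, by omega, by omega,
    by simp; omega, ?_, ?_, ?_⟩
  all_goals
    simpa (disch := omega) only [getD_append_cons_of_lt_length,
      getD_append_cons_length_add_one_add, Nat.add_zero]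

theorem Occ2341.occ123_or_occ4123 {u v : List ℕ} (ht : ∀ x ∈ v ++ u, m < x)
    (h : Occ2341 (u ++ m :: v)) : Occ123 (v ++ u) ∨ Occ4123 (v ++ u) := by
  obtain ⟨a, c, d, hac, hcd, hd, h₁, h₂, h₃⟩ := h
  simp only [length_append, length_cons] at hd
  have hge : ∀ x ∈ u ++ m :: v, m ≤ x := fun x hx => by
    rcases mem_cons.1 (perm_middle.mem_iff.1 hx) with rfl | hx
    · exact le_rfl
    · exact (ht x (perm_append_comm.mem_iff.1 hx)).le
  have hma : m < (u ++ m :: v).getD a 0 :=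
    (getD_of_forall_mem hge (by simpa using hd) 0).trans_lt h₁
  have hne : ∀ i, m < (u ++ m :: v).getD i 0 → i ≠ u.length := by
    rintro i hi rfl
    simp at hi
  have ha := hne a hma
  have ha' := hne (a + 1) (hma.trans h₂)
  have hc := hne c ((hma.trans h₂).trans h₃)
  obtain hpa | ⟨hap, hpc⟩ | hcp :
      u.length < a ∨ (a + 1 < u.length ∧ u.length < c) ∨ c < u.length := by
    omega
  · obtain ⟨i, rfl⟩ : ∃ i, a = u.length + 1 + i := ⟨a - u.length - 1, by omega⟩
    obtain ⟨k, rfl⟩ : ∃ k, c = u.length + 1 + k := ⟨c - u.length - 1, by omega⟩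
    rw [show u.length + 1 + i + 1 = u.length + 1 + (i + 1) by omega] at h₂ h₃
    rw [getD_append_cons_length_add_one_add (by omega),
      getD_append_cons_length_add_one_add (by omega)] at h₂
    rw [getD_append_cons_length_add_one_add (by omega),
      getD_append_cons_length_add_one_add (by omega)] at h₃
    exact Or.inl ⟨i, k, by omega, by simp; omega, h₂, h₃⟩
  · obtain ⟨k, rfl⟩ : ∃ k, c = u.length + 1 + k := ⟨c - u.length - 1, by omega⟩
    obtain ⟨l, rfl⟩ : ∃ l, d = u.length + 1 + l := ⟨d - u.length - 1, by omega⟩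
    rw [getD_append_cons_of_lt_length (by omega),
      getD_append_cons_of_lt_length (by omega)] at h₂
    rw [getD_append_cons_length_add_one_add (by omega),
      getD_append_cons_of_lt_length (by omega)] at h₁
    rw [getD_append_cons_length_add_one_add (by omega),
      getD_append_cons_of_lt_length (by omega)] at h₃
    exact Or.inr ⟨k, l, v.length + a, by omega, by omega, by simp; omega, h₁, h₂, h₃⟩
  · rw [getD_append_cons_of_lt_length (by omega),
      getD_append_cons_of_lt_length (by omega)] at h₂
    rw [getD_append_cons_of_lt_length (by omega),
      getD_append_cons_of_lt_length (by omega)] at h₃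
    exact Or.inl ⟨v.length + a, v.length + c, by omega, by simp; omega, h₂, h₃⟩

theorem exists_isRotated_occ2341_iff (ht : ∀ x ∈ t, m < x) :
    (∃ r, (m :: t) ~r r ∧ Occ2341 r) ↔ Occ123 t ∨ Occ4123 t := by
  simp only [isRotated_cons_iff]
  constructor
  · rintro ⟨_, ⟨u, v, rfl, rfl⟩, h⟩
    exact h.occ123_or_occ4123 ht
  · rintro (h | h)
    · exact ⟨_, ⟨t, [], by simp, rfl⟩, h.occ2341_append_singleton ht⟩
    · obtain ⟨u, v, rfl, h'⟩ := h.exists_occ2341 m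
      exact ⟨_, ⟨u, v, rfl, rfl⟩, h'⟩

end Occurrences

theorem circAvoids2341_iff {w : List ℕ} :
    CircAvoids2341 w ↔ ¬ ∃ r, w ~r r ∧ Occ2341 r := by
  simp [CircAvoids2341, IsRotated]

theorem IsPermOf.exists_rotate_idxOf_one {n : ℕ} {w : List ℕ} (hw : IsPermOf n w)
    (hn : 1 ≤ n) :
    ∃ t, w.rotate (w.idxOf 1) = 1 :: t ∧ ∀ x ∈ t, 1 < x := by
  have hpos : ∀ x ∈ w, 1 ≤ x := fun x hx => by
    obtain ⟨k, -, rfl⟩ := mem_map.1 (hw.mem_iff.1 hx)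
    omega
  have hnodup : w.Nodup := hw.nodup_iff.2 (nodup_range.map (add_left_injective 1))
  have hidx : w.idxOf 1 < w.length :=
    idxOf_lt_length_iff.2 (hw.mem_iff.2 (mem_map.2 ⟨0, mem_range.2 hn, rfl⟩))
  obtain ⟨t, ht⟩ : ∃ t, w.rotate (w.idxOf 1) = 1 :: t := by
    rw [rotate_eq_drop_append_take hidx.le, drop_eq_getElem_cons hidx, getElem_idxOf hidx]
    exact ⟨_, rfl⟩
  have hnodup' : (1 :: t).Nodup := ht ▸ nodup_rotate.2 hnodup
  refine ⟨t, ht, fun x hx => lt_of_le_of_ne (hpos x ?_) ?_⟩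
  · exact mem_rotate.1 (ht ▸ mem_cons_of_mem 1 hx)
  · rintro rfl
    exact (nodup_cons.1 hnodup').1 hx

theorem stmt0 (n : ℕ) (hn : 2 ≤ n) (w : List ℕ) (hw : IsPermOf n w) :
    CircAvoids2341 w ↔
      ¬ Occ123 ((w.rotate (w.idxOf 1)).tail) ∧
      ¬ Occ4123 ((w.rotate (w.idxOf 1)).tail) := by
  obtain ⟨t, hrot, ht⟩ := hw.exists_rotate_idxOf_one (by omega)
  have hwt : w ~r 1 :: t := ⟨_, hrot⟩
  rw [hrot, tail_cons, ← not_or, ← exists_isRotated_occ2341_iff ht, circAvoids2341_iff]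
  exact not_congr (exists_congr fun r => and_congr_left fun _ => ⟨hwt.symm.trans, hwt.trans⟩)
end

section
/- For n ≥ 2 and 1 ≤ j ≤ n−1, the number b(n,n,j) of permutations in B_n ending in the two letters n, j equals 1 if j = 1 and equals 0 otherwise; moreover the unique such permutation when j = 1 is (n−1)(n−2)⋯2 n 1. -/
open List

/-!
In a word `u ++ [n, j]` of `B_n` the letter `1` lies to the right of `n`, so `j = 1`. Then every
ascent of `u` followed by the letter `n` would be an occurrence of `1̄2̄3`, so `u` is decreasing,
i.e. `u = (n-1)(n-2)⋯2`. Conversely, every ascent of `(n-1)(n-2)⋯2 n 1` ends at the maximal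
letter `n`, which rules out both `1̄2̄3` and `41\overline{23}`.
-/

section IsPermOf

variable {n : ℕ} {w : List ℕ}

lemma IsPermOf.mem_iff (hw : IsPermOf n w) {x : ℕ} : x ∈ w ↔ 1 ≤ x ∧ x ≤ n := by
  rw [List.Perm.mem_iff hw, mem_map]
  simp only [mem_range]
  exact ⟨by rintro ⟨y, hy, rfl⟩; omega, fun h => ⟨x - 1, by omega, by omega⟩⟩

lemma IsPermOf.nodup (hw : IsPermOf n w) : w.Nodup :=
  (List.Perm.nodup_iff hw).mpr (nodup_range.map (add_left_injective 1))

end IsPermOf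

lemma getD_le_of_forall_mem_le {w : List ℕ} {m : ℕ} (h : ∀ x ∈ w, x ≤ m) (i : ℕ) :
    w.getD i 0 ≤ m := by
  rw [getD_eq_getElem?_getD]
  cases hi : w[i]? with
  | none => simp
  | some x => exact h x (mem_of_getElem? hi)

def AscentsEndAt (m : ℕ) (w : List ℕ) : Prop :=
  ∀ a, w.getD a 0 < w.getD (a + 1) 0 → w.getD (a + 1) 0 = m

section AscentsEndAt

variable {w : List ℕ} {m : ℕ}

lemma not_occ123_of_ascentsEndAt (hw : ∀ x ∈ w, x ≤ m) (ha : AscentsEndAt m w) :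
    ¬ Occ123 w := by
  rintro ⟨a, c, -, -, hab, hbc⟩
  have := getD_le_of_forall_mem_le hw c
  have := ha a hab
  omega

lemma not_occ4123_of_ascentsEndAt (hw : ∀ x ∈ w, x ≤ m) (ha : AscentsEndAt m w) :
    ¬ Occ4123 w := by
  rintro ⟨a, b, c, -, -, -, -, hc, hca⟩
  have := getD_le_of_forall_mem_le hw a
  have := ha c hc
  omega

lemma ascentsEndAt_append_pair {u : List ℕ} {x : ℕ} (hu : u.IsChain (· ≥ ·)) (hx : x ≤ m) :
    AscentsEndAt m (u ++ [m, x]) := by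
  intro a hasc
  rcases lt_or_ge (a + 1) u.length with h | h
  · rw [getD_append _ _ _ _ (by omega), getD_append _ _ _ _ h, getD_eq_getElem _ _ (by omega),
      getD_eq_getElem _ _ h] at hasc
    exact absurd hasc (isChain_iff_getElem.mp hu a h).not_gt
  · rcases h.eq_or_lt with h | h
    · rw [getD_append_right _ _ _ _ h.le, ← h, Nat.sub_self]
      rfl
    · obtain ⟨d, rfl⟩ : ∃ d, a = u.length + d := ⟨a - u.length, by omega⟩
      rw [getD_append_right _ _ _ _ (by omega), getD_append_right _ _ _ _ (by omega),
        Nat.add_sub_cancel_left, show u.length + d + 1 - u.length = d + 1 by omega] at hasc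
      rcases d with _ | d <;> simp at hasc
      omega

end AscentsEndAt

lemma isChain_ge_of_not_occ123 {u v : List ℕ} {m : ℕ} (hu : ∀ x ∈ u, x < m)
    (h : ¬ Occ123 (u ++ m :: v)) : u.IsChain (· ≥ ·) := by
  rw [isChain_iff_getElem]
  intro i hi
  by_contra hlt
  push Not at hlt
  refine h ⟨i, u.length, by omega, by simp, ?_, ?_⟩
  · rwa [getD_append _ _ _ _ (by omega), getD_append _ _ _ _ hi, getD_eq_getElem _ _ (by omega),
      getD_eq_getElem _ _ hi]
  · rw [getD_append _ _ _ _ hi, getD_append_right _ _ _ _ le_rfl, Nat.sub_self,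
      getD_eq_getElem _ _ hi]
    exact hu _ (getElem_mem _)

def downToTwo (k : ℕ) : List ℕ := ((range k).map (· + 2)).reverse

lemma mem_downToTwo {k x : ℕ} : x ∈ downToTwo k ↔ 2 ≤ x ∧ x < k + 2 := by
  simp only [downToTwo, mem_reverse, mem_map, mem_range]
  exact ⟨by rintro ⟨y, hy, rfl⟩; omega, fun h => ⟨x - 2, by omega, by omega⟩⟩

lemma pairwise_ge_downToTwo (k : ℕ) : (downToTwo k).Pairwise (· ≥ ·) := by
  simpa [downToTwo, pairwise_reverse, pairwise_map] using pairwise_lt_range.imp le_of_lt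

lemma isPermOf_downToTwo_append (k : ℕ) : IsPermOf (k + 2) (downToTwo k ++ [k + 2, 1]) := by
  rw [IsPermOf, range_succ, range_succ_eq_map]
  simp only [downToTwo, map_cons, map_append, map_map, Function.comp_def, map_nil]
  calc _ ~ ((range k).map (· + 2) ++ [k + 2]) ++ [1] := by
        simpa using (reverse_perm _).append_right [k + 2, 1]
    _ ~ _ := perm_append_singleton _ _

lemma downToTwo_append_mem_Bnij (k : ℕ) : downToTwo k ++ [k + 2, 1] ∈ Bnij (k + 2) (k + 2) 1 := by
  have hperm := isPermOf_downToTwo_append k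
  have hle : ∀ x ∈ downToTwo k ++ [k + 2, 1], x ≤ k + 2 := fun x hx => (hperm.mem_iff.mp hx).2
  have hasc : AscentsEndAt (k + 2) (downToTwo k ++ [k + 2, 1]) :=
    ascentsEndAt_append_pair (isChain_iff_pairwise.mpr (pairwise_ge_downToTwo k)) (by omega)
  refine ⟨⟨⟨⟨hperm, not_occ123_of_ascentsEndAt hle hasc, not_occ4123_of_ascentsEndAt hle hasc⟩,
    ?_⟩, ?_⟩, downToTwo k, rfl⟩
  · intro h
    have hlast := congrArg getLast? (Set.mem_singleton_iff.mp h)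
    rw [show downToTwo k ++ [k + 2, 1] = downToTwo k ++ [k + 2] ++ [1] by simp, getLast?_concat,
      excludedPerm, getLast?_concat, Option.some.injEq] at hlast
    omega
  · have hn : k + 2 ∉ downToTwo k := fun h => by simp [mem_downToTwo] at h
    have h1 : 1 ∉ downToTwo k := fun h => by simp [mem_downToTwo] at h
    show idxOf (k + 2) _ < idxOf 1 _
    rw [idxOf_append_of_notMem hn, idxOf_append_of_notMem h1, idxOf_cons_self,
      idxOf_cons_ne _ (by omega), idxOf_cons_self]
    omega

lemma eq_downToTwo_append_of_mem_Bnij {k : ℕ} {w : List ℕ} (hw : w ∈ Bnij (k + 2) (k + 2) 1) :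
    w = downToTwo k ++ [k + 2, 1] := by
  obtain ⟨⟨⟨⟨hperm, h123, -⟩, -⟩, -⟩, u, rfl⟩ := hw
  have huR : u ~ downToTwo k :=
    (perm_append_right_iff _).mp (hperm.trans (isPermOf_downToTwo_append k).symm)
  have hu : ∀ x ∈ u, x < k + 2 := fun x hx => (mem_downToTwo.mp (huR.subset hx)).2
  rw [huR.eq_of_pairwise' (isChain_iff_pairwise.mp (isChain_ge_of_not_occ123 hu h123))
    (pairwise_ge_downToTwo k)]

theorem Bnij_self_one {n : ℕ} (hn : 2 ≤ n) :
    Bnij n n 1 = {((range (n - 2)).map (· + 2)).reverse ++ [n, 1]} := by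
  obtain ⟨k, rfl⟩ : ∃ k, n = k + 2 := ⟨n - 2, by omega⟩
  exact Set.eq_singleton_iff_unique_mem.mpr
    ⟨downToTwo_append_mem_Bnij k, fun _ => eq_downToTwo_append_of_mem_Bnij⟩

theorem Bnij_self_eq_empty {n j : ℕ} (hn : 2 ≤ n) (hj : j ≠ 1) : Bnij n n j = ∅ := by
  refine Set.eq_empty_iff_forall_notMem.mpr ?_
  rintro w ⟨⟨⟨⟨hperm, -, -⟩, -⟩, hidx⟩, u, rfl⟩
  have h1u : 1 ∈ u := by
    simpa [show 1 ≠ n by omega, Ne.symm hj] using hperm.mem_iff.mpr ⟨le_rfl, by omega⟩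
  have hnu : n ∉ u := fun h => (nodup_append.mp hperm.nodup).2.2 n h n (by simp) rfl
  change idxOf n (u ++ [n, j]) < idxOf 1 (u ++ [n, j]) at hidx
  rw [idxOf_append_of_notMem hnu, idxOf_append_of_mem h1u, idxOf_cons_self] at hidx
  have := idxOf_lt_length_of_mem h1u
  omega

theorem stmt2_general (n j : ℕ) (hn : 2 ≤ n) :
    bcount n n j = (if j = 1 then 1 else 0) ∧
    Bnij n n 1 = {((List.range (n - 2)).map (· + 2)).reverse ++ [n, 1]} := by
  refine ⟨?_, Bnij_self_one hn⟩
  split_ifs with hj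
  · rw [bcount, hj, Bnij_self_one hn, Set.ncard_singleton]
  · rw [bcount, Bnij_self_eq_empty hn hj, Set.ncard_empty]

theorem stmt2 (n j : ℕ) (hn : 2 ≤ n) (hj1 : 1 ≤ j) (hj : j ≤ n - 1) :
    bcount n n j = (if j = 1 then 1 else 0) ∧
    Bnij n n 1 = {((List.range (n - 2)).map (· + 2)).reverse ++ [n, 1]} :=
  stmt2_general n j hn
end

section
/- For n ≥ 4, c(n,2,n−1) = 2^{n−4}. Explicitly, the members of C_{n,2,n−1} are exactly the permutations of the form α 1 n β 2 (n−1), where α and β are decreasing sequences partitioning the set {3,…,n−2} (α possibly empty), and every such word lies in C_{n,2,n−1}. -/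
open List

/-! Since the last letter is `n - 1`, avoiding `1̄2̄3` forces every adjacent ascent before it to
end in a letter at least `n - 1`, hence in `n`. So the word minus its last letter decreases except
for a single step up to `n`, and as `1` precedes `n`, it stands immediately before `n`; this gives
`α 1 n β 2 (n-1)` with `α`, `β` decreasing. Conversely the only adjacent ascents of such a word are
`1 n` and `2 (n-1)`, and neither can be part of a `1̄2̄3` or `41\overline{23}` occurrence. The word
is determined by the set of letters of `α`, an arbitrary subset of `{3, …, n-2}`. -/

section Descents

variable {α : Type*} [LinearOrder α]

theorem isChain_gt_or_eq_append_cons {l r : List α} {t : α} (hl : l.Pairwise (· > ·))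
    (hr : r.Pairwise (· > ·)) (hrt : ∀ y ∈ r, y < t) :
    (l ++ t :: r).IsChain (fun x y => y < x ∨ y = t) := by
  refine (hl.isChain.imp fun _ _ h => Or.inl h).append ?_ (by simp)
  exact isChain_cons.2
    ⟨fun y hy => Or.inl (hrt y (mem_of_mem_head? hy)), hr.isChain.imp fun _ _ h => Or.inl h⟩

theorem pairwise_gt_of_isChain {l : List α} {t : α} (ht : t ∉ l)
    (h : l.IsChain (fun x y => y < x ∨ y = t)) : l.Pairwise (· > ·) :=
  isChain_iff_pairwise.1 <| h.imp_of_mem_imp fun _ _ _ hy hxy =>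
    hxy.resolve_right (ne_of_mem_of_not_mem hy ht)

theorem exists_eq_append_cons_of_isChain {v : List α} {t : α} (hv : v.Nodup) (ht : t ∈ v)
    (h : v.IsChain (fun x y => y < x ∨ y = t)) :
    ∃ l r, v = l ++ t :: r ∧ l.Pairwise (· > ·) ∧ r.Pairwise (· > ·) := by
  obtain ⟨l, r, rfl⟩ := append_of_mem ht
  have htlr : t ∉ l ++ r := (nodup_cons.1 (nodup_middle.1 hv)).1
  exact ⟨l, r, rfl, pairwise_gt_of_isChain (fun h => htlr (mem_append_left r h)) h.left_of_append,
    pairwise_gt_of_isChain (fun h => htlr (mem_append_right l h)) h.right_of_append.tail⟩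

theorem exists_eq_append_singleton_of_pairwise_gt {l : List α} {x : α} (hl : l.Pairwise (· > ·))
    (hx : x ∈ l) (hmin : ∀ y ∈ l, x ≤ y) : ∃ l', l = l' ++ [x] := by
  obtain ⟨s, _ | ⟨y, t⟩, rfl⟩ := append_of_mem hx
  · exact ⟨s, rfl⟩
  · have hyx : y < x := (pairwise_cons.1 (pairwise_append.1 hl).2.1).1 y mem_cons_self
    exact absurd (hmin y (by simp)) (not_le.2 hyx)

end Descents

section Indices

variable {α : Type*}

theorem List.idxOf_append_cons_of_notMem [DecidableEq α] {l r : List α} {x : α} (hx : x ∉ l) :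
    (l ++ x :: r).idxOf x = l.length := by
  rw [idxOf_append_of_notMem hx, idxOf_cons_self, Nat.add_zero]

theorem List.getD_mem_of_lt {l : List α} {d : α} {i : ℕ} (hi : i < l.length) : l.getD i d ∈ l := by
  rw [getD_eq_getElem _ _ hi]
  exact getElem_mem hi

theorem List.Nodup.idxOf_getD [DecidableEq α] {l : List α} (hl : l.Nodup) {d : α} {i : ℕ}
    (hi : i < l.length) : l.idxOf (l.getD i d) = i := by
  rw [getD_eq_getElem _ _ hi]
  exact hl.idxOf_getElem i hi

theorem List.IsChain.rel_getD {R : α → α → Prop} {l : List α} (h : l.IsChain R) {d : α} {i : ℕ}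
    (hi : i + 1 < l.length) : R (l.getD i d) (l.getD (i + 1) d) := by
  rw [getD_eq_getElem _ _ hi, getD_eq_getElem _ _ (by omega)]
  exact isChain_iff_getElem.1 h i hi

end Indices

theorem isChain_of_not_occ123 {v : List ℕ} {z : ℕ} (hv : v.Nodup) (h : ¬ Occ123 (v ++ [z])) :
    v.IsChain (fun x y => y < x ∨ z ≤ y) := by
  refine isChain_iff_getElem.2 fun i hi => ?_
  have hne : v[i] ≠ v[i + 1] := fun e => by have := hv.getElem_inj_iff.1 e; omega
  by_contra! hc
  refine h ⟨i, v.length, by omega, by simp, ?_, ?_⟩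
  all_goals rw [getD_append _ _ _ _ (by omega), getD_eq_getElem _ _ (by omega)]
  · rw [getD_append _ _ _ _ hi, getD_eq_getElem _ _ hi]; omega
  · rw [getD_append_right _ _ _ _ le_rfl, Nat.sub_self, getD_cons_zero]; exact hc.2

theorem mem_range_map_succ {k x : ℕ} : x ∈ (range k).map (· + 1) ↔ 1 ≤ x ∧ x ≤ k := by
  simp only [mem_map, mem_range]
  exact ⟨by rintro ⟨i, hi, rfl⟩; omega, fun h => ⟨x - 1, by omega, by omega⟩⟩

theorem nodup_range_map_succ (k : ℕ) : ((range k).map (· + 1)).Nodup :=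
  nodup_range.map (add_left_injective 1)

/- `n = m + 4` throughout, which keeps truncated subtraction out of `n - 1` and `n - 4`. -/
section Shape

variable (m : ℕ)

def midLetters : List ℕ := (range m).map (· + 3)

def cWord (α β : List ℕ) : List ℕ := α ++ 1 :: (m + 4) :: (β ++ [2, m + 3])

def cWords : Set (List ℕ) :=
  {w | ∃ α β : List ℕ, α.Pairwise (· > ·) ∧ β.Pairwise (· > ·) ∧
    (α ++ β).Perm (midLetters m) ∧ w = cWord m α β}

def cWordOfFinset (s : Finset ℕ) : List ℕ :=
  cWord m (s.sort (· ≥ ·)) (((midLetters m).toFinset \ s).sort (· ≥ ·))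

theorem nodup_midLetters : (midLetters m).Nodup :=
  nodup_range.map (add_left_injective 3)

theorem length_midLetters : (midLetters m).length = m := by simp [midLetters]

theorem range_map_succ_eq_midLetters :
    (range (m + 4)).map (· + 1) = 1 :: 2 :: (midLetters m ++ [m + 3, m + 4]) := by
  induction m with
  | zero => rfl
  | succ m ih =>
    rw [show m + 1 + 4 = m + 4 + 1 from rfl, range_succ, map_append, ih]
    simp [midLetters, range_succ]

variable {m}

theorem mem_midLetters {x : ℕ} : x ∈ midLetters m ↔ 3 ≤ x ∧ x < m + 3 := by
  simp only [midLetters, mem_map, mem_range]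
  exact ⟨by rintro ⟨i, hi, rfl⟩; omega, fun h => ⟨x - 3, by omega, by omega⟩⟩

theorem cWord_perm_iff {α β : List ℕ} :
    (cWord m α β).Perm ((range (m + 4)).map (· + 1)) ↔ (α ++ β).Perm (midLetters m) := by
  have hw : (cWord m α β).Perm ((α ++ β) ++ [1, m + 4, 2, m + 3]) := by
    simp only [cWord, perm_iff_count, count_append, count_cons, count_nil]
    intro a; omega
  have hfull : ((range (m + 4)).map (· + 1)).Perm (midLetters m ++ [1, m + 4, 2, m + 3]) := by
    simp only [range_map_succ_eq_midLetters, perm_iff_count, count_append, count_cons, count_nil]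
    intro a; omega
  exact ⟨fun h => (perm_append_right_iff _).1 (hw.symm.trans (h.trans hfull)),
    fun h => hw.trans (((perm_append_right_iff _).2 h).trans hfull.symm)⟩

theorem mem_bounds_of_perm_midLetters {α β : List ℕ} (hαβ : (α ++ β).Perm (midLetters m)) :
    (∀ x ∈ α, 3 ≤ x ∧ x < m + 3) ∧ ∀ x ∈ β, 3 ≤ x ∧ x < m + 3 :=
  ⟨fun _ hx => mem_midLetters.1 (hαβ.subset (mem_append_left β hx)),
    fun _ hx => mem_midLetters.1 (hαβ.subset (mem_append_right α hx))⟩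

theorem isChain_cWord {α β : List ℕ} (hα : α.Pairwise (· > ·)) (hβ : β.Pairwise (· > ·))
    (hαβ : (α ++ β).Perm (midLetters m)) :
    (cWord m α β).IsChain (fun x y => y < x ∨ y = m + 4 ∨ (x = 2 ∧ y = m + 3)) := by
  obtain ⟨hmidα, hmidβ⟩ := mem_bounds_of_perm_midLetters hαβ
  have hv := isChain_gt_or_eq_append_cons (l := α ++ [1]) (r := β ++ [2]) (t := m + 4)
    (pairwise_append.2 ⟨hα, pairwise_singleton _ _, by grind⟩)
    (pairwise_append.2 ⟨hβ, pairwise_singleton _ _, by grind⟩) (by grind)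
  rw [show cWord m α β = (α ++ [1] ++ (m + 4) :: (β ++ [2])) ++ [m + 3] by simp [cWord]]
  refine (hv.imp fun x y h => ?_).append (isChain_singleton _) (by simp [getLast?_cons])
  tauto

theorem idxOf_cWord {α β : List ℕ} (hαβ : (α ++ β).Perm (midLetters m)) :
    (cWord m α β).idxOf 1 = α.length ∧ (cWord m α β).idxOf (m + 4) = α.length + 1 ∧
      (cWord m α β).idxOf 2 = m + 2 := by
  obtain ⟨hmidα, hmidβ⟩ := mem_bounds_of_perm_midLetters hαβ
  have hlen : α.length + β.length = m := by simpa [length_midLetters] using hαβ.length_eq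
  refine ⟨idxOf_append_cons_of_notMem (by grind), ?_, ?_⟩
  · rw [show cWord m α β = (α ++ [1]) ++ (m + 4) :: (β ++ [2, m + 3]) by simp [cWord],
      idxOf_append_cons_of_notMem (by grind), length_append, length_singleton]
  · rw [show cWord m α β = (α ++ 1 :: (m + 4) :: β) ++ [2, m + 3] by simp [cWord],
      idxOf_append_cons_of_notMem (by grind)]
    simp only [length_append, length_cons]
    omega

theorem cWord_mem_Cnij {α β : List ℕ} (hα : α.Pairwise (· > ·)) (hβ : β.Pairwise (· > ·))
    (hαβ : (α ++ β).Perm (midLetters m)) : cWord m α β ∈ Cnij (m + 4) 2 (m + 3) := by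
  obtain ⟨hidx1, hidxn, hidx2⟩ := idxOf_cWord hαβ
  have hlen : α.length + β.length = m := by simpa [length_midLetters] using hαβ.length_eq
  set w := cWord m α β with hw
  have hperm : w.Perm ((range (m + 4)).map (· + 1)) := cWord_perm_iff.2 hαβ
  have hnd : w.Nodup := hperm.nodup_iff.2 (nodup_range_map_succ _)
  have hbound : ∀ i < w.length, 1 ≤ w.getD i 0 ∧ w.getD i 0 ≤ m + 4 := fun i hi =>
    mem_range_map_succ.1 (hperm.subset (getD_mem_of_lt hi))
  have hasc : ∀ i, i + 1 < w.length → w.getD i 0 < w.getD (i + 1) 0 →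
      w.getD (i + 1) 0 = m + 4 ∨ (w.getD i 0 = 2 ∧ w.getD (i + 1) 0 = m + 3) := fun i hi h =>
    ((isChain_cWord hα hβ hαβ).rel_getD hi).resolve_left (not_lt.2 h.le)
  have h123 : ¬ Occ123 w := by
    rintro ⟨a, c, hac, hc, h1, h2⟩
    have hbc := hbound c hc
    rcases hasc a (by omega) h1 with h | ⟨ha, ha1⟩
    · omega
    · have hc' := hnd.idxOf_getD (d := 0) hc
      have ha' := hnd.idxOf_getD (d := 0) (i := a) (by omega)
      rw [show w.getD c 0 = m + 4 by omega, hidxn] at hc'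
      rw [ha, hidx2] at ha'
      omega
  have h4123 : ¬ Occ4123 w := by
    rintro ⟨a, b, c, hab, hbc, hc, h1, h2, h3⟩
    have hba := hbound a (by omega)
    have hbb := hbound b (by omega)
    rcases hasc c hc h2 with h | ⟨hc2, hc3⟩
    · omega
    · have ha' := hnd.idxOf_getD (d := 0) (i := a) (by omega)
      have hb' := hnd.idxOf_getD (d := 0) (i := b) (by omega)
      rw [show w.getD a 0 = m + 4 by omega, hidxn] at ha'
      rw [show w.getD b 0 = 1 by omega, hidx1] at hb'
      omega
  have hne : w ≠ excludedPerm (m + 4) := fun h => by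
    have := congrArg getLast? h
    simp [hw, cWord, excludedPerm, getLast?_cons] at this
  exact ⟨⟨⟨⟨hperm, h123, h4123⟩, hne⟩, by omega, by omega⟩, α ++ 1 :: (m + 4) :: β,
    by simp [hw, cWord]⟩

theorem exists_cWord_of_mem_Cnij {w : List ℕ} (hw : w ∈ Cnij (m + 4) 2 (m + 3)) :
    ∃ α β, α.Pairwise (· > ·) ∧ β.Pairwise (· > ·) ∧ (α ++ β).Perm (midLetters m) ∧
      w = cWord m α β := by
  obtain ⟨⟨⟨⟨hperm, h123, -⟩, -⟩, h1n, -⟩, u, rfl⟩ := hw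
  rw [show u ++ [2, m + 3] = (u ++ [2]) ++ [m + 3] by rw [append_assoc]; rfl] at *
  have hnd : (u ++ [2] ++ [m + 3]).Nodup := hperm.nodup_iff.2 (nodup_range_map_succ _)
  have hmem : ∀ x ∈ u ++ [2], 1 ≤ x ∧ x ≤ m + 4 := fun x hx =>
    mem_range_map_succ.1 (hperm.subset (mem_append_left _ hx))
  have hvnd : (u ++ [2]).Nodup := hnd.sublist (sublist_append_left _ _)
  have h3 : m + 3 ∉ u ++ [2] := fun h => (nodup_append.1 hnd).2.2 _ h _ (mem_singleton_self _) rfl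
  have hchain : (u ++ [2]).IsChain (fun x y => y < x ∨ y = m + 4) :=
    (isChain_of_not_occ123 hvnd h123).imp_of_mem_imp fun _ y _ hy h =>
      h.imp_right fun _ => by have := hmem y hy; have := ne_of_mem_of_not_mem hy h3; omega
  have hn : m + 4 ∈ u ++ [2] := by
    have := hperm.symm.subset (mem_range_map_succ.2 ⟨by omega, le_rfl⟩)
    simpa using this
  obtain ⟨α', r, hv, hα', hr⟩ := exists_eq_append_cons_of_isChain hvnd hn hchain
  have hnα' : m + 4 ∉ α' := fun h =>
    (nodup_cons.1 (nodup_middle.1 (hv ▸ hvnd))).1 (mem_append_left r h)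
  have h1 : 1 ∈ α' := by
    by_contra h1
    rw [hv, append_assoc, cons_append, idxOf_append_cons_of_notMem hnα',
      idxOf_append_of_notMem h1] at h1n
    omega
  obtain ⟨α, rfl⟩ := exists_eq_append_singleton_of_pairwise_gt hα' h1
    fun y hy => (hmem y (hv ▸ mem_append_left _ hy)).1
  obtain ⟨β, rfl⟩ : ∃ β, r = β ++ [2] := by
    have hlast := congrArg getLast? hv
    rcases r.eq_nil_or_concat with rfl | ⟨β, y, rfl⟩
    · simp at hlast
    · simp [getLast?_cons] at hlast
      exact ⟨β, by rw [hlast, concat_eq_append]⟩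
  have hweq : u ++ [2] ++ [m + 3] = cWord m α β := by rw [hv]; simp [cWord]
  rw [hweq] at hperm
  exact ⟨α, β, (pairwise_append.1 hα').1, (pairwise_append.1 hr).1, cWord_perm_iff.1 hperm, hweq⟩

theorem Cnij_eq_cWords : Cnij (m + 4) 2 (m + 3) = cWords m := by
  ext w
  refine ⟨exists_cWord_of_mem_Cnij, ?_⟩
  rintro ⟨α, β, hα, hβ, hαβ, rfl⟩
  exact cWord_mem_Cnij hα hβ hαβ

theorem cWords_eq_image :
    cWords m = ((midLetters m).toFinset.powerset.image (cWordOfFinset m) : Set (List ℕ)) := by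
  ext w
  simp only [cWords, Set.mem_ofPred_eq, Finset.coe_image, Set.mem_image, Finset.mem_coe,
    Finset.mem_powerset]
  constructor
  · rintro ⟨α, β, hα, hβ, hαβ, rfl⟩
    have hnd := hαβ.nodup_iff.2 (nodup_midLetters m)
    have hsdiff : (midLetters m).toFinset \ α.toFinset = β.toFinset := by
      rw [← toFinset_eq_of_perm _ _ hαβ, toFinset_append, Finset.union_sdiff_cancel_left
        (disjoint_toFinset_iff_disjoint.2 (disjoint_of_nodup_append hnd))]
    refine ⟨α.toFinset, fun x hx => ?_, ?_⟩
    · simpa using hαβ.subset (mem_append_left β (mem_toFinset.1 hx))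
    · rw [cWordOfFinset, hsdiff, (toFinset_sort _ (nodup_append.1 hnd).1).2 (hα.imp le_of_lt),
        (toFinset_sort _ (nodup_append.1 hnd).2.1).2 (hβ.imp le_of_lt)]
  · rintro ⟨s, hs, rfl⟩
    refine ⟨_, _, (Finset.sortedGT_sort _).pairwise, (Finset.sortedGT_sort _).pairwise, ?_, rfl⟩
    refine perm_of_nodup_nodup_toFinset_eq ?_ (nodup_midLetters m) ?_
    · refine nodup_append.2 ⟨Finset.sort_nodup _ _, Finset.sort_nodup _ _, fun a ha b hb => ?_⟩
      rw [Finset.mem_sort] at ha hb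
      exact ne_of_mem_of_not_mem ha (Finset.mem_sdiff.1 hb).2
    · rw [toFinset_append, Finset.sort_toFinset, Finset.sort_toFinset,
        Finset.union_sdiff_of_subset hs]

theorem cWordOfFinset_injOn : Set.InjOn (cWordOfFinset m) (midLetters m).toFinset.powerset := by
  intro s hs s' hs' h
  have h1 : ∀ t ∈ (midLetters m).toFinset.powerset, 1 ∉ t.sort (· ≥ ·) := fun t ht h1 => by
    have := mem_midLetters.1 (mem_toFinset.1
      (Finset.mem_powerset.1 ht ((Finset.mem_sort _).1 h1)))
    omega
  have hlen := congrArg (idxOf 1) h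
  rw [cWordOfFinset, cWordOfFinset, cWord, cWord, idxOf_append_cons_of_notMem (h1 s hs),
    idxOf_append_cons_of_notMem (h1 s' hs')] at hlen
  rw [← Finset.sort_toFinset s (· ≥ ·), ← Finset.sort_toFinset s' (· ≥ ·),
    (append_inj h hlen).1]

theorem ncard_cWords : (cWords m).ncard = 2 ^ m := by
  rw [cWords_eq_image, Set.ncard_coe_finset, Finset.card_image_of_injOn
    cWordOfFinset_injOn, Finset.card_powerset, toFinset_card_of_nodup (nodup_midLetters m),
    length_midLetters]

end Shape

theorem stmt6 (n : ℕ) (hn : 4 ≤ n) :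
    ccount n 2 (n - 1) = 2 ^ (n - 4) ∧
    Cnij n 2 (n - 1) =
      {w | ∃ α β : List ℕ, List.Pairwise (· > ·) α ∧ List.Pairwise (· > ·) β ∧
        (α ++ β).Perm ((List.range (n - 4)).map (· + 3)) ∧
        w = α ++ 1 :: n :: (β ++ [2, n - 1])} := by
  obtain ⟨m, rfl⟩ : ∃ m, n = m + 4 := ⟨n - 4, by omega⟩
  exact ⟨(congrArg Set.ncard Cnij_eq_cWords).trans ncard_cWords, Cnij_eq_cWords⟩
end

section
/- For n ≥ 2, v(n,1) = Σ_{i=1}^{n−1} v(n−1, i); indeed, deleting the final letter 1 gives a bijection from the set of permutations of [n] avoiding {1̄2̄3, 1\overline{23}} that end in 1 onto the set of all permutations of [n−1] avoiding {1̄2̄3, 1\overline{23}}. -/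
open List

/-! The inverse of deleting the final letter 1 and lowering the other letters by one is
`shiftAppendOne`: raise every letter by one and append 1. Raising all letters is order
preserving, so it neither creates nor destroys occurrences of 1̄2̄3 or 1\overline{23}; and in
both patterns the rightmost letter of an occurrence is its largest, so an appended letter
not exceeding any other letter cannot take part in one. Counting `V_{n-1}` by last letter gives
the sum. -/

lemma getD_map_of_lt {α β : Type*} {f : α → β} {v : List α} {i : ℕ} (d : α) (d' : β)
    (hi : i < v.length) :
    (v.map f).getD i d' = f (v.getD i d) := by
  rw [getD_eq_getElem _ _ (by simpa using hi), getD_eq_getElem _ _ hi, getElem_map]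

lemma getD_mem_of_lt {α : Type*} {w : List α} {i : ℕ} (d : α) (hi : i < w.length) :
    w.getD i d ∈ w := by
  rw [getD_eq_getElem _ _ hi]; exact getElem_mem hi

lemma ncard_eq_sum_ncard_getLast {α : Type*} [DecidableEq α] {S : Set (List α)} (hS : S.Finite)
    {I : Finset α} (hI : ∀ w ∈ S, ∃ i ∈ I, ∃ u, w = u ++ [i]) :
    S.ncard = ∑ i ∈ I, {w ∈ S | ∃ u, w = u ++ [i]}.ncard := by
  simp_rw [← getLast?_eq_some_iff] at hI ⊢
  rw [Set.ncard_eq_toFinset_card S hS,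
    Finset.card_eq_sum_card_fiberwise (f := getLast?) (t := I.image some) ?_,
    Finset.sum_image (Option.some_injective _).injOn]
  · refine Finset.sum_congr rfl fun i _ => ?_
    rw [← Set.ncard_coe_finset]
    congr 1
    ext w
    simp
  · intro w hw
    obtain ⟨i, hi, hw⟩ := hI w (hS.mem_toFinset.1 hw)
    exact Finset.mem_image.2 ⟨i, hi, hw.symm⟩

lemma occ123_map_iff {f : ℕ → ℕ} (hf : StrictMono f) (v : List ℕ) :
    Occ123 (v.map f) ↔ Occ123 v := by
  simp only [Occ123, length_map]
  refine exists₂_congr fun a c => and_congr_right fun hac => and_congr_right fun hc => ?_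
  rw [getD_map_of_lt 0 0 (by omega), getD_map_of_lt 0 0 (by omega), getD_map_of_lt 0 0 hc,
    hf.lt_iff_lt, hf.lt_iff_lt]

lemma occ1_23_map_iff {f : ℕ → ℕ} (hf : StrictMono f) (v : List ℕ) :
    Occ1_23 (v.map f) ↔ Occ1_23 v := by
  simp only [Occ1_23, length_map]
  refine exists₂_congr fun a b => and_congr_right fun hab => and_congr_right fun hb => ?_
  rw [getD_map_of_lt 0 0 (by omega), getD_map_of_lt 0 0 (by omega), getD_map_of_lt 0 0 hb,
    hf.lt_iff_lt, hf.lt_iff_lt]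

lemma occ123_append_singleton_iff {w : List ℕ} {x : ℕ} (hx : ∀ y ∈ w, x ≤ y) :
    Occ123 (w ++ [x]) ↔ Occ123 w := by
  simp only [Occ123, length_append, length_singleton]
  refine exists₂_congr fun a c => and_congr_right fun hac => ?_
  rcases lt_trichotomy c w.length with hc | rfl | hc
  · rw [getD_append w [x] 0 a (by omega), getD_append w [x] 0 (a + 1) (by omega),
      getD_append w [x] 0 c hc]
    simp only [hc, Nat.lt_succ_of_lt hc, true_and]
  · rw [getD_append_right w [x] 0 _ le_rfl, Nat.sub_self, getD_cons_zero,
      getD_append w [x] 0 (a + 1) (by omega)]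
    have := hx _ (getD_mem_of_lt 0 (show a + 1 < w.length by omega))
    exact iff_of_false (fun h => by omega) (fun h => by omega)
  · exact iff_of_false (fun h => by omega) (fun h => by omega)

lemma occ1_23_append_singleton_iff {w : List ℕ} {x : ℕ} (hx : ∀ y ∈ w, x ≤ y) :
    Occ1_23 (w ++ [x]) ↔ Occ1_23 w := by
  simp only [Occ1_23, length_append, length_singleton]
  refine exists₂_congr fun a b => and_congr_right fun hab => ?_
  rcases lt_trichotomy (b + 1) w.length with hb | hb | hb
  · rw [getD_append w [x] 0 a (by omega), getD_append w [x] 0 b (by omega),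
      getD_append w [x] 0 (b + 1) hb]
    simp only [hb, Nat.lt_succ_of_lt hb, true_and]
  · rw [hb, getD_append_right w [x] 0 _ le_rfl, Nat.sub_self, getD_cons_zero,
      getD_append w [x] 0 b (by omega)]
    have := hx _ (getD_mem_of_lt 0 (show b < w.length by omega))
    exact iff_of_false (fun h => by omega) (fun h => by omega)
  · exact iff_of_false (fun h => by omega) (fun h => by omega)

lemma IsPermOf.mem_Icc {n : ℕ} {w : List ℕ} (hw : IsPermOf n w) {x : ℕ} (hx : x ∈ w) :
    x ∈ Finset.Icc 1 n := by
  obtain ⟨k, hk, rfl⟩ := List.mem_map.1 (hw.subset hx)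
  rw [mem_range] at hk
  exact Finset.mem_Icc.2 ⟨by omega, by omega⟩

lemma IsPermOf.exists_eq_append_singleton {n : ℕ} {w : List ℕ} (hw : IsPermOf n w)
    (hn : n ≠ 0) :
    ∃ i ∈ Finset.Icc 1 n, ∃ u, w = u ++ [i] := by
  rcases eq_nil_or_concat' w with rfl | ⟨u, i, rfl⟩
  · exact absurd (by simpa using hw.length_eq.symm) hn
  · exact ⟨i, hw.mem_Icc (mem_append_right u (mem_singleton_self i)), u, rfl⟩

lemma vset_finite (n : ℕ) : (Vset n).Finite :=
  (List.finite_toSet ((List.range n).map (· + 1)).permutations).subset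
    fun _ hw => mem_permutations.2 hw.1

def shiftAppendOne (v : List ℕ) : List ℕ := v.map (· + 1) ++ [1]

lemma isPermOf_shiftAppendOne_iff {m : ℕ} {v : List ℕ} :
    IsPermOf (m + 1) (shiftAppendOne v) ↔ IsPermOf m v := by
  have hrange : (List.range (m + 1)).map (· + 1)
      = 1 :: ((List.range m).map (· + 1)).map (· + 1) := by
    simp [List.range_succ_eq_map, List.map_map, Function.comp_def]
  rw [IsPermOf, IsPermOf, shiftAppendOne, hrange, (perm_append_singleton 1 _).congr_left,
    perm_cons, map_perm_map_iff (add_left_injective 1)]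

lemma shiftAppendOne_mem_vset_iff {m : ℕ} {v : List ℕ} :
    shiftAppendOne v ∈ Vset (m + 1) ↔ v ∈ Vset m := by
  have hmono : StrictMono (· + 1 : ℕ → ℕ) := fun _ _ h => Nat.succ_lt_succ h
  have hone : ∀ y ∈ v.map (· + 1), 1 ≤ y := by simp
  simp only [Vset, Set.mem_ofPred_eq, isPermOf_shiftAppendOne_iff]
  rw [shiftAppendOne, occ123_append_singleton_iff hone, occ1_23_append_singleton_iff hone,
    occ123_map_iff hmono, occ1_23_map_iff hmono]

lemma dropLast_map_pred_shiftAppendOne (v : List ℕ) :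
    (shiftAppendOne v).dropLast.map (· - 1) = v := by
  simp [shiftAppendOne, map_map, Function.comp_def]

lemma shiftAppendOne_dropLast_map_pred {u : List ℕ} (hu : ∀ x ∈ u, 1 ≤ x) :
    shiftAppendOne ((u ++ [1]).dropLast.map (· - 1)) = u ++ [1] := by
  rw [dropLast_concat, shiftAppendOne, map_map]
  congr 1
  exact (map_congr_left fun x hx => Nat.sub_add_cancel (hu x hx)).trans (map_id u)

lemma bijOn_dropLast_map_pred (m : ℕ) :
    Set.BijOn (fun w : List ℕ => w.dropLast.map (· - 1))
      {w ∈ Vset (m + 1) | ∃ u, w = u ++ [1]} (Vset m) := by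
  have hinv : Set.InvOn shiftAppendOne (fun w : List ℕ => w.dropLast.map (· - 1))
      {w ∈ Vset (m + 1) | ∃ u, w = u ++ [1]} (Vset m) := by
    refine ⟨?_, fun v _ => dropLast_map_pred_shiftAppendOne v⟩
    rintro _ ⟨hw, u, rfl⟩
    exact shiftAppendOne_dropLast_map_pred fun x hx =>
      (Finset.mem_Icc.1 (hw.1.mem_Icc (mem_append_left _ hx))).1
  refine hinv.bijOn (fun w hw => ?_) fun v hv => ⟨shiftAppendOne_mem_vset_iff.2 hv, _, rfl⟩
  rw [← shiftAppendOne_mem_vset_iff, hinv.1 hw]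
  exact hw.1

theorem stmt11 (n : ℕ) (hn : 2 ≤ n) :
    vcount n 1 = ∑ i ∈ Finset.Icc 1 (n - 1), vcount (n - 1) i ∧
    Set.BijOn (fun w : List ℕ => w.dropLast.map (· - 1))
      {w ∈ Vset n | ∃ u, w = u ++ [1]} (Vset (n - 1)) := by
  obtain ⟨m, rfl⟩ : ∃ m, n = m + 1 := ⟨n - 1, by omega⟩
  rw [Nat.add_sub_cancel]
  have hbij := bijOn_dropLast_map_pred m
  refine ⟨?_, hbij⟩
  rw [vcount, ← hbij.injOn.ncard_image, hbij.image_eq]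
  exact ncard_eq_sum_ncard_getLast (vset_finite m)
    fun w hw => hw.1.exists_eq_append_singleton (by omega)
end
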